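/- Let K ∈ ℝ, N ∈ (1,∞), and let h be a CD(K,N) density on an interval I ⊂ ℝ which is not identically zero (hence h is strictly positive on the interior of I). Set g := h^{1/(N−1)}. If x is an interior point of I at which g has a second Peano derivative q, then q ≤ −(K/(N−1))·g(x); equivalently, at any interior point x where h is twice differentiable, (log h)″(x) + ((log h)′(x))²/(N−1) ≤ −K. -/

import Mathlib

/-- The distortion coefficients `σ^{(t)}_{K,𝒩}(θ)`, valued in `[0,∞]`
(the value is `+∞` when `K > 0` and `θ·√(K/𝒩) ≥ π`). -/
noncomputable def sigmaCoeff (K Np t θ : ℝ) : ENNReal :=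
  if θ = 0 then ENNReal.ofReal t
  else if 0 < K then
    if θ * Real.sqrt (K / Np) < Real.pi then
      ENNReal.ofReal (Real.sin (t * (θ * Real.sqrt (K / Np))) / Real.sin (θ * Real.sqrt (K / Np)))
    else ⊤
  else if K = 0 then ENNReal.ofReal t
  else
    ENNReal.ofReal
      (Real.sinh (t * (θ * Real.sqrt (-K / Np))) / Real.sinh (θ * Real.sqrt (-K / Np)))

/-- `h` is a `CD(K,N)` density on the (interval) `I ⊆ ℝ`: it is nonnegative on `I` and
`h(t·x₁+(1-t)·x₀)^{1/(N-1)} ≥ σ^{(t)}_{K,N-1}(|x₁-x₀|)·h(x₁)^{1/(N-1)}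
  + σ^{(1-t)}_{K,N-1}(|x₁-x₀|)·h(x₀)^{1/(N-1)}` for all `x₀,x₁ ∈ I`, `t ∈ [0,1]`. -/
def IsCDDensity (K N : ℝ) (h : ℝ → ℝ) (I : Set ℝ) : Prop :=
  (∀ x ∈ I, 0 ≤ h x) ∧
  ∀ x₀ ∈ I, ∀ x₁ ∈ I, ∀ t ∈ Set.Icc (0:ℝ) 1,
    sigmaCoeff K (N - 1) t |x₁ - x₀| * ENNReal.ofReal (h x₁ ^ (1 / (N - 1)))
        + sigmaCoeff K (N - 1) (1 - t) |x₁ - x₀| * ENNReal.ofReal (h x₀ ^ (1 / (N - 1)))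
      ≤ ENNReal.ofReal (h (t * x₁ + (1 - t) * x₀) ^ (1 / (N - 1)))

/-- `g` has a second Peano derivative `q` at `τ₀`: it is differentiable at `τ₀` (with some
derivative `d`) and `g(τ₀+ε) = g(τ₀) + d·ε + q·ε²/2 + o(ε²)` as `ε → 0`. -/
def HasSecondPeanoDerivAt (g : ℝ → ℝ) (q : ℝ) (τ₀ : ℝ) : Prop :=
  ∃ d : ℝ, HasDerivAt g d τ₀ ∧
    Asymptotics.IsLittleO (nhds (0 : ℝ))
      (fun ε : ℝ => g (τ₀ + ε) - g τ₀ - d * ε - q * ε ^ 2 / 2)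
      (fun ε : ℝ => ε ^ 2)

/-!
Write `g = h^{1/(N-1)}` and `κ = K/(N-1)`. The CD inequality at `t = 1/2` for the pair `x ± ε`
reads `g(x+ε) + g(x-ε) ≤ 2 c_κ(ε) g(x)`, where `c_κ` is the cosine of curvature `κ`
(`σ^{(1/2)}(2ε) = 1/(2 c_κ(ε))` by the double-angle formula). Dividing by `ε²` and letting
`ε → 0⁺`, the symmetric second difference of `g` tends to `q` and that of `c_κ` to `-κ`.

For the logarithmic form, the chain rule gives `g'' = g/(N-1) · ((log h)'' + (log h)'²/(N-1))`.
Because `deriv h` is `0` wherever `h` is not differentiable, `deriv h` may have a derivative at `x`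
while `h` has non-differentiability points accumulating at `x`; then `h'(x) = h''(x) = 0`, and
for `K > 0` the function `g` is concave, so the smallness of `g'` at its (dense) points of
differentiability near `x` still yields `g(x ± ε) = g(x) + o(ε²)`.
-/

open Real Filter Set Topology Asymptotics MeasureTheory

theorem hasSecondPeanoDerivAt_of_hasDerivAt {f f' : ℝ → ℝ} {q x : ℝ}
    (hf : ∀ᶠ y in 𝓝 x, HasDerivAt f (f' y) y) (hq : HasDerivAt f' q x) :
    HasSecondPeanoDerivAt f q x := by
  obtain ⟨s, hs, hsx, hfs⟩ :
      ∃ s ∈ 𝓝 x, Convex ℝ s ∧ ∀ y ∈ s, HasDerivAt f (f' y) y := by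
    obtain ⟨r, hr, hball⟩ := Metric.eventually_nhds_iff_ball.mp hf
    exact ⟨_, Metric.ball_mem_nhds x hr, convex_ball x r, hball⟩
  have hremainder : (fun y => f y - f x - f' x * (y - x) - q * (y - x) ^ 2 / 2)
      =o[𝓝 x] fun y => (y - x) ^ 2 := by
    have hderiv : ∀ y ∈ s, HasDerivWithinAt
        (fun y => f y - f x - f' x * (y - x) - q * (y - x) ^ 2 / 2)
        (f' y - f' x - q * (y - x)) s y := by
      intro y hy
      have := ((((hfs y hy).sub_const (f x)).sub
        (((hasDerivAt_id y).sub_const x).const_mul (f' x))).sub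
        ((((hasDerivAt_id y).sub_const x).pow 2).const_mul q |>.div_const 2))
      exact (this.congr_deriv (by simp; ring)).hasDerivWithinAt
    have hsmall : (fun y => f' y - f' x - q * (y - x)) =o[𝓝[s] x] fun y => (y - x) ^ 1 := by
      rw [nhdsWithin_eq_nhds.mpr hs]
      simpa [mul_comm] using hasDerivAt_iff_isLittleO.mp hq
    simpa [nhdsWithin_eq_nhds.mpr hs] using
      hsx.isLittleO_pow_succ_real (mem_of_mem_nhds hs) hderiv hsmall
  refine ⟨f' x, hf.self_of_nhds, ?_⟩
  simpa [Function.comp_def] using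
    hremainder.comp_tendsto ((continuous_const_add x).tendsto' 0 x (add_zero x))

theorem HasSecondPeanoDerivAt.tendsto_symmetricSecondDifference {g : ℝ → ℝ} {q x : ℝ}
    (hg : HasSecondPeanoDerivAt g q x) :
    Tendsto (fun ε => (g (x + ε) + g (x - ε) - 2 * g x) / ε ^ 2) (𝓝[>] 0) (𝓝 q) := by
  obtain ⟨d, -, hrem⟩ := hg
  have hrem_neg : (fun ε => g (x + -ε) - g x - d * -ε - q * (-ε) ^ 2 / 2) =o[𝓝 0]
      fun ε => ε ^ 2 :=
    (hrem.comp_tendsto (continuous_neg.tendsto' 0 0 neg_zero)).congr_right fun ε => neg_sq ε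
  have hsum := (hrem.add hrem_neg).tendsto_div_nhds_zero
  have hlim : Tendsto (fun ε => (g (x + ε) + g (x - ε) - 2 * g x) / ε ^ 2) (𝓝[≠] 0)
      (𝓝 (0 + q)) := by
    refine ((hsum.mono_left nhdsWithin_le_nhds).add_const q).congr' ?_
    filter_upwards [self_mem_nhdsWithin] with ε (hε : ε ≠ 0)
    simp only [neg_sq, ← sub_eq_add_neg]
    field_simp
    ring
  simpa using hlim.mono_left (nhdsGT_le_nhdsNE 0)

noncomputable def generalizedCos (κ ε : ℝ) : ℝ :=
  if 0 < κ then cos (ε * √κ) else if κ = 0 then 1 else cosh (ε * √(-κ))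

theorem generalizedCos_neg (κ ε : ℝ) : generalizedCos κ (-ε) = generalizedCos κ ε := by
  simp only [generalizedCos, neg_mul, cos_neg, cosh_neg]

theorem generalizedCos_zero (κ : ℝ) : generalizedCos κ 0 = 1 := by
  simp [generalizedCos]

theorem hasSecondPeanoDerivAt_generalizedCos (κ : ℝ) :
    HasSecondPeanoDerivAt (generalizedCos κ) (-κ) 0 := by
  rcases lt_trichotomy κ 0 with hκ | rfl | hκ
  · have hfun : generalizedCos κ = fun ε => cosh (ε * √(-κ)) := by
      ext ε; simp [generalizedCos, hκ.not_gt, hκ.ne]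
    rw [hfun]
    refine hasSecondPeanoDerivAt_of_hasDerivAt
      (Eventually.of_forall fun ε => ((hasDerivAt_mul_const _).cosh)) ?_
    refine (((hasDerivAt_mul_const √(-κ)).sinh).mul_const (√(-κ))).congr_deriv ?_
    simp [mul_self_sqrt (neg_nonneg.mpr hκ.le)]
  · have hfun : generalizedCos 0 = fun _ => 1 := by ext ε; simp [generalizedCos]
    rw [hfun, neg_zero]
    exact hasSecondPeanoDerivAt_of_hasDerivAt
      (Eventually.of_forall fun ε => hasDerivAt_const ε 1) (hasDerivAt_const 0 0)
  · have hfun : generalizedCos κ = fun ε => cos (ε * √κ) := by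
      ext ε; simp [generalizedCos, hκ]
    rw [hfun]
    refine hasSecondPeanoDerivAt_of_hasDerivAt
      (Eventually.of_forall fun ε => ((hasDerivAt_mul_const _).cos)) ?_
    refine ((((hasDerivAt_mul_const √κ).sin).neg).mul_const (√κ)).congr_deriv ?_
    simp [mul_self_sqrt hκ.le]

theorem tendsto_two_mul_generalizedCos_sub_two_div_sq (κ : ℝ) :
    Tendsto (fun ε => (2 * generalizedCos κ ε - 2) / ε ^ 2) (𝓝[>] 0) (𝓝 (-κ)) := by
  simpa [generalizedCos_neg, generalizedCos_zero, two_mul] using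
    (hasSecondPeanoDerivAt_generalizedCos κ).tendsto_symmetricSecondDifference

theorem mul_sin_le_sin_mul {t u : ℝ} (ht : t ∈ Icc (0 : ℝ) 1) (hu : u ∈ Icc 0 π) :
    t * sin u ≤ sin (t * u) := by
  have := strictConcaveOn_sin_Icc.concaveOn.2 (left_mem_Icc.mpr pi_pos.le) hu
    (sub_nonneg.mpr ht.2) ht.1 (sub_add_cancel 1 t)
  simpa using this

section sigmaCoeff

variable {K Np t θ : ℝ}

theorem sigmaCoeff_pos (hNp : 0 < Np) (ht : 0 < t) (ht1 : t ≤ 1) (hθ : 0 ≤ θ) :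
    0 < sigmaCoeff K Np t θ := by
  unfold sigmaCoeff
  split_ifs with hθ0 hK hπ hK0
  · exact ENNReal.ofReal_pos.mpr ht
  · have hu : 0 < θ * √(K / Np) := mul_pos (lt_of_le_of_ne hθ (Ne.symm hθ0)) (by positivity)
    refine ENNReal.ofReal_pos.mpr (div_pos (sin_pos_of_pos_of_lt_pi (by positivity) ?_)
      (sin_pos_of_pos_of_lt_pi hu hπ))
    nlinarith
  · exact ENNReal.zero_lt_top
  · exact ENNReal.ofReal_pos.mpr ht
  · have hK : K < 0 := lt_of_le_of_ne (not_lt.mp hK) hK0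
    have hl : 0 < √(-K / Np) := sqrt_pos.mpr (div_pos (neg_pos.mpr hK) hNp)
    have hu : 0 < θ * √(-K / Np) := mul_pos (lt_of_le_of_ne hθ (Ne.symm hθ0)) hl
    exact ENNReal.ofReal_pos.mpr (div_pos (sinh_pos_iff.mpr (by positivity)) (sinh_pos_iff.mpr hu))

theorem ofReal_le_sigmaCoeff (hK : 0 ≤ K) (hNp : 0 < Np) (ht : t ∈ Icc (0 : ℝ) 1)
    (hθ : 0 ≤ θ) :
    ENNReal.ofReal t ≤ sigmaCoeff K Np t θ := by
  unfold sigmaCoeff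
  split_ifs with hθ0 hK' hπ hK0
  · exact le_rfl
  · have hu : 0 < θ * √(K / Np) := mul_pos (lt_of_le_of_ne hθ (Ne.symm hθ0)) (by positivity)
    refine ENNReal.ofReal_le_ofReal ((le_div_iff₀ (sin_pos_of_pos_of_lt_pi hu hπ)).mpr ?_)
    exact mul_sin_le_sin_mul ht ⟨hu.le, hπ.le⟩
  · exact le_top
  · exact le_rfl
  · exact absurd (lt_of_le_of_ne hK (Ne.symm hK0)) hK'

theorem eventually_sigmaCoeff_half_two_mul (hNp : 0 < Np) :
    ∀ᶠ ε in 𝓝[>] 0, 0 < generalizedCos (K / Np) ε ∧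
      sigmaCoeff K Np (1 / 2) (2 * ε) = ENNReal.ofReal (1 / (2 * generalizedCos (K / Np) ε)) := by
  have hsmall : ∀ᶠ ε in 𝓝[>] (0 : ℝ), ε * √(K / Np) < π / 2 :=
    (((continuous_mul_const _).tendsto' 0 0 (zero_mul _)).eventually
      (gt_mem_nhds (half_pos pi_pos))).filter_mono nhdsWithin_le_nhds
  filter_upwards [hsmall, self_mem_nhdsWithin] with ε hεπ (hε : 0 < ε)
  have h2ε : 2 * ε ≠ 0 := by positivity
  rcases lt_trichotomy K 0 with hK | rfl | hK
  · have hc : generalizedCos (K / Np) ε = cosh (ε * √(-K / Np)) := by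
      simp [generalizedCos, (div_neg_of_neg_of_pos hK hNp).not_gt,
        (div_neg_of_neg_of_pos hK hNp).ne, neg_div]
    rw [hc]
    refine ⟨cosh_pos _, ?_⟩
    simp only [sigmaCoeff, h2ε, hK.not_gt, hK.ne, if_false]
    congr 1
    set l := √(-K / Np)
    have : 0 < sinh (ε * l) :=
      sinh_pos_iff.mpr (mul_pos hε (sqrt_pos.mpr (div_pos (neg_pos.mpr hK) hNp)))
    rw [show 2 * ε * l = 2 * (ε * l) by ring, sinh_two_mul]
    field_simp
  · simp [sigmaCoeff, generalizedCos, h2ε]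
  · have hc : generalizedCos (K / Np) ε = cos (ε * √(K / Np)) := by
      simp [generalizedCos, div_pos hK hNp]
    have hu : 0 < ε * √(K / Np) := mul_pos hε (sqrt_pos.mpr (div_pos hK hNp))
    have hcos : 0 < cos (ε * √(K / Np)) := cos_pos_of_mem_Ioo ⟨by linarith, hεπ⟩
    rw [hc]
    refine ⟨hcos, ?_⟩
    have hπ : 2 * ε * √(K / Np) < π := by linarith
    simp only [sigmaCoeff, h2ε, hK, hπ, if_true, if_false]
    congr 1
    set l := √(K / Np)
    have : 0 < sin (ε * l) := sin_pos_of_pos_of_lt_pi hu (by linarith)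
    rw [show 2 * ε * l = 2 * (ε * l) by ring, sin_two_mul]
    field_simp

end sigmaCoeff

theorem deriv_eq_zero_and_eq_zero_of_frequently_not_differentiableAt {f : ℝ → ℝ} {q x : ℝ}
    (hq : HasDerivAt (deriv f) q x) (hf : ∃ᶠ y in 𝓝[≠] x, ¬DifferentiableAt ℝ f y) :
    deriv f x = 0 ∧ q = 0 := by
  have hzero : ∃ᶠ y in 𝓝[≠] x, deriv f y = 0 :=
    hf.mono fun y => deriv_zero_of_not_differentiableAt
  have hx : deriv f x = 0 := tendsto_nhds_unique_of_frequently_eq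
    (hq.continuousAt.tendsto.mono_left nhdsWithin_le_nhds) tendsto_const_nhds hzero
  refine ⟨hx, tendsto_nhds_unique_of_frequently_eq (hasDerivAt_iff_tendsto_slope.mp hq)
    tendsto_const_nhds (hzero.mono fun y hy => ?_)⟩
  simp [slope_def_field, hy, hx]

theorem deriv_rpow_const_of_eventually_pos {h : ℝ → ℝ} {p y : ℝ} (hp : p ≠ 0)
    (hpos : ∀ᶠ z in 𝓝 y, 0 < h z) :
    deriv (fun z => h z ^ p) y = deriv h y * p * h y ^ (p - 1) := by
  by_cases hd : DifferentiableAt ℝ h y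
  · exact deriv_rpow_const hd (Or.inl hpos.self_of_nhds.ne')
  rw [deriv_zero_of_not_differentiableAt hd, zero_mul, zero_mul]
  refine deriv_zero_of_not_differentiableAt fun hg => hd ?_
  have hinv : (fun z => (h z ^ p) ^ p⁻¹) =ᶠ[𝓝 y] h :=
    hpos.mono fun z hz => by simp only [← rpow_mul hz.le, mul_inv_cancel₀ hp, rpow_one]
  exact (hg.rpow_const (Or.inl (rpow_pos_of_pos hpos.self_of_nhds _).ne')).congr_of_eventuallyEq
    hinv.symm

theorem hasDerivAt_deriv_rpow_const {h : ℝ → ℝ} {p x h'' : ℝ} (hp : p ≠ 0) (hx : 0 < h x)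
    (hd : DifferentiableAt ℝ h x) (hh'' : HasDerivAt (deriv h) h'' x) :
    HasDerivAt (deriv fun y => h y ^ p)
      (p * h x ^ p * (h'' / h x + (p - 1) * (deriv h x / h x) ^ 2)) x := by
  have hpos : ∀ᶠ y in 𝓝 x, 0 < h y := hd.continuousAt.eventually (lt_mem_nhds hx)
  have heq : (deriv fun y => h y ^ p) =ᶠ[𝓝 x] fun y => deriv h y * p * h y ^ (p - 1) :=
    hpos.eventually_nhds.mono fun y hy => deriv_rpow_const_of_eventually_pos hp hy
  refine HasDerivAt.congr_of_eventuallyEq ?_ heq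
  refine ((hh''.mul_const p).mul
    (hd.hasDerivAt.rpow_const (p := p - 1) (Or.inl hx.ne'))).congr_deriv ?_
  rw [rpow_sub_one hx.ne', rpow_sub_one hx.ne', rpow_sub_one hx.ne']
  field_simp

theorem ConcaveOn.exists_differentiableAt_mem_Ioo {g : ℝ → ℝ} {U : Set ℝ} {a b : ℝ}
    (hU : IsOpen U) (hg : ConcaveOn ℝ U g) (hab : a < b) (hsub : Ioo a b ⊆ U) :
    ∃ y ∈ Ioo a b, DifferentiableAt ℝ g y := by
  have hmid : (a + b) / 2 ∈ Ioo a b := ⟨by linarith, by linarith⟩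
  obtain ⟨C, t, ht, hlip⟩ := hg.locallyLipschitzOn hU (hsub hmid)
  rw [nhdsWithin_eq_nhds.mpr (hU.mem_nhds (hsub hmid))] at ht
  have hs : IsOpen (interior t ∩ Ioo a b) := isOpen_interior.inter isOpen_Ioo
  obtain ⟨y, hys, hy⟩ := Measure.exists_mem_of_measure_ne_zero_of_ae
    (hs.measure_ne_zero volume ⟨_, mem_interior_iff_mem_nhds.mpr ht, hmid⟩)
    ((hlip.mono (inter_subset_left.trans interior_subset)).ae_differentiableWithinAt
      hs.measurableSet)
  exact ⟨y, hys.2, hy.differentiableAt (hs.mem_nhds hys)⟩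

theorem ConcaveOn.isLittleO_sub_nhdsGE {g : ℝ → ℝ} {U : Set ℝ} {x : ℝ} (hU : IsOpen U)
    (hg : ConcaveOn ℝ U g) (hx : x ∈ U) (hg' : HasDerivAt g 0 x)
    (hd : deriv g =o[𝓝 x] fun y => y - x) :
    (fun ε => g (x + ε) - g x) =o[𝓝[≥] 0] fun ε => ε ^ 2 := by
  refine isLittleO_iff.mpr fun c hc => ?_
  obtain ⟨δ, hδ, hball⟩ := Metric.eventually_nhds_iff.mp
    ((hU.eventually_mem hx).and (isLittleO_iff.mp hd (half_pos hc)))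
  filter_upwards [Ico_mem_nhdsGE (half_pos hδ)] with ε ⟨hε0, hεδ⟩
  rcases hε0.eq_or_lt with rfl | hε
  · simp
  have hnear : ∀ y ∈ Ioo x (x + 2 * ε), dist y x < δ := fun y hy => by
    rw [Real.dist_eq, abs_of_pos (sub_pos.mpr hy.1)]; linarith [hy.2]
  have hxε : x + ε ∈ U := (hball (hnear _ ⟨by linarith, by linarith⟩)).1
  -- by concavity, `g' y` at a point of differentiability `y` right of `x + ε` bounds the slope
  obtain ⟨y, ⟨hy₁, hy₂⟩, hyd⟩ :=
    hg.exists_differentiableAt_mem_Ioo hU (by linarith : x + ε < x + 2 * ε) fun y hy =>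
      (hball (hnear y ⟨by linarith [hy.1], hy.2⟩)).1
  obtain ⟨hyU, hyderiv⟩ := hball (hnear y ⟨by linarith, hy₂⟩)
  rw [Real.norm_eq_abs, Real.norm_eq_abs, abs_of_pos (by linarith : 0 < y - x)] at hyderiv
  have hupper : slope g x (x + ε) ≤ 0 := hg.slope_le_of_hasDerivAt hx hxε (by linarith) hg'
  have hlower : -(c * ε) ≤ slope g x (x + ε) :=
    calc -(c * ε) ≤ deriv g y := by nlinarith [neg_abs_le (deriv g y)]
      _ ≤ slope g x y := hg.deriv_le_slope hx hyU (by linarith) hyd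
      _ ≤ slope g x (x + ε) := hg.slope_anti hx ⟨hxε, by simp [hε.ne']⟩
          ⟨hyU, by simp; linarith⟩ (by linarith)
  rw [slope_def_field, add_sub_cancel_left, div_le_iff₀ hε] at hupper
  rw [slope_def_field, add_sub_cancel_left, le_div_iff₀ hε] at hlower
  rw [Real.norm_eq_abs, Real.norm_eq_abs, abs_of_nonneg (sq_nonneg ε), abs_le]
  constructor <;> nlinarith

theorem ConcaveOn.hasSecondPeanoDerivAt_zero {g : ℝ → ℝ} {U : Set ℝ} {x : ℝ}
    (hU : IsOpen U) (hg : ConcaveOn ℝ U g) (hx : x ∈ U) (hg' : HasDerivAt g 0 x)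
    (hg'' : HasDerivAt (deriv g) 0 x) : HasSecondPeanoDerivAt g 0 x := by
  have hd : deriv g =o[𝓝 x] fun y => y - x := by
    simpa [hg'.deriv] using hasDerivAt_iff_isLittleO.mp hg''
  have hright := hg.isLittleO_sub_nhdsGE hU hx hg' hd
  -- the left half is the right half for the reflection `y ↦ g (-y)`
  have hleft : (fun ε => g (-(-x + ε)) - g (-(-x))) =o[𝓝[≥] 0] fun ε => ε ^ 2 := by
    have hneg : ConcaveOn ℝ (-U) fun y => g (-y) := hg.comp_linearMap (-LinearMap.id)
    refine hneg.isLittleO_sub_nhdsGE hU.neg (by simpa using hx) ?_ ?_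
    · exact (zero_mul (-1 : ℝ)) ▸ hg'.comp_of_eq (-x) (hasDerivAt_neg (-x)) (neg_neg x).symm
    · rw [show deriv (fun y => g (-y)) = fun y => -deriv g (-y) from
        funext (deriv_comp_neg g), ← isLittleO_neg_right]
      refine (hd.comp_tendsto (continuous_neg.tendsto' (-x) x (neg_neg x))).neg_left.congr_right
        fun y => show -y - x = -(y - -x) by ring
  have hflip : Tendsto Neg.neg (𝓝[<] (0 : ℝ)) (𝓝[≥] 0) :=
    tendsto_nhdsWithin_of_tendsto_nhds_of_eventually_within _
      ((continuous_neg.tendsto' 0 0 neg_zero).mono_left nhdsWithin_le_nhds)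
      (eventually_nhdsWithin_of_forall fun ε (hε : ε < 0) => neg_nonneg.mpr hε.le)
  refine ⟨0, hg', ?_⟩
  simp only [zero_mul, zero_div, sub_zero]
  rw [← nhdsLT_sup_nhdsGE]
  refine IsLittleO.sup ?_ hright
  refine ((hleft.comp_tendsto hflip).congr_right fun ε => neg_sq ε).congr_left fun ε => ?_
  simp [sub_eq_add_neg, add_comm]

theorem le_of_ofReal_mul_add_ofReal_mul_le {a b u v w : ℝ} (ha : 0 ≤ a) (hb : 0 ≤ b)
    (hu : 0 ≤ u) (hv : 0 ≤ v) (hw : 0 ≤ w)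
    (h : ENNReal.ofReal a * ENNReal.ofReal u + ENNReal.ofReal b * ENNReal.ofReal v ≤
      ENNReal.ofReal w) :
    a * u + b * v ≤ w := by
  rwa [← ENNReal.ofReal_mul ha, ← ENNReal.ofReal_mul hb,
    ← ENNReal.ofReal_add (by positivity) (by positivity), ENNReal.ofReal_le_ofReal_iff hw] at h

namespace IsCDDensity

variable {K N : ℝ} {h : ℝ → ℝ} {I : Set ℝ} {x : ℝ}

theorem pos_of_mem_interior (hN : 1 < N) (hCD : IsCDDensity K N h I)
    (hne : ∃ z ∈ I, h z ≠ 0) (hx : x ∈ interior I) : 0 < h x := by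
  obtain ⟨z, hzI, hz⟩ := hne
  obtain ⟨δ, hδI, hδ⟩ : ∃ δ : ℝ, x + δ * (x - z) ∈ I ∧ 0 < δ := by
    have hlim : Tendsto (fun δ : ℝ => x + δ * (x - z)) (𝓝[>] 0) (𝓝 x) :=
      (((continuous_mul_const _).const_add x).tendsto' 0 x (by simp)).mono_left
        nhdsWithin_le_nhds
    exact ((hlim.eventually (mem_interior_iff_mem_nhds.mp hx)).and self_mem_nhdsWithin).exists
  -- `x` divides the segment from `z` to `x + δ (x - z)` in the ratio `1 : δ`
  set x₁ := x + δ * (x - z)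
  set t := 1 / (1 + δ)
  have ht : t ∈ Icc (0 : ℝ) 1 :=
    ⟨by positivity, (div_le_one (by positivity)).mpr (by linarith)⟩
  have ht' : 0 < 1 - t := sub_pos.mpr ((div_lt_one (by positivity)).mpr (by linarith))
  have hcd := hCD.2 z hzI x₁ hδI t ht
  rw [show t * x₁ + (1 - t) * z = x by simp only [x₁, t]; field_simp; ring] at hcd
  by_contra hx0
  rw [le_antisymm (not_lt.mp hx0) (hCD.1 x (interior_subset hx)),
    zero_rpow (one_div_ne_zero (by linarith)), ENNReal.ofReal_zero] at hcd
  have hterm : 0 < sigmaCoeff K (N - 1) (1 - t) |x₁ - z| * ENNReal.ofReal (h z ^ (1 / (N - 1))) :=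
    ENNReal.mul_pos (sigmaCoeff_pos (by linarith) ht' (by linarith [ht.1]) (abs_nonneg _)).ne'
      (ENNReal.ofReal_pos.mpr (rpow_pos_of_pos ((hCD.1 z hzI).lt_of_ne' hz) _)).ne'
  exact hterm.not_ge (le_add_self.trans hcd)

theorem concaveOn (hN : 1 < N) (hK : 0 ≤ K) (hI : Convex ℝ I) (hCD : IsCDDensity K N h I) :
    ConcaveOn ℝ I fun y => h y ^ (1 / (N - 1)) := by
  refine ⟨hI, fun a ha b hb s t hs ht hst => ?_⟩
  have hmem : s • a + t • b ∈ I := hI ha hb hs ht hst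
  simp only [smul_eq_mul] at hmem ⊢
  have hcd := hCD.2 a ha b hb t ⟨ht, by linarith⟩
  rw [show 1 - t = s by linarith, show t * b + s * a = s * a + t * b by ring] at hcd
  have hlow : ENNReal.ofReal t * ENNReal.ofReal (h b ^ (1 / (N - 1))) +
      ENNReal.ofReal s * ENNReal.ofReal (h a ^ (1 / (N - 1))) ≤
      ENNReal.ofReal (h (s * a + t * b) ^ (1 / (N - 1))) := by
    refine le_trans ?_ hcd
    gcongr <;> exact ofReal_le_sigmaCoeff hK (by linarith) ⟨by assumption, by linarith⟩
      (abs_nonneg _)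
  have := le_of_ofReal_mul_add_ofReal_mul_le ht hs (rpow_nonneg (hCD.1 b hb) _)
    (rpow_nonneg (hCD.1 a ha) _) (rpow_nonneg (hCD.1 _ hmem) _) hlow
  linarith

theorem eventually_midpoint_le (hN : 1 < N) (hCD : IsCDDensity K N h I) (hx : x ∈ interior I) :
    ∀ᶠ ε in 𝓝[>] 0, h (x + ε) ^ (1 / (N - 1)) + h (x - ε) ^ (1 / (N - 1)) ≤
      2 * generalizedCos (K / (N - 1)) ε * h x ^ (1 / (N - 1)) := by
  have hI : ∀ᶠ ε in 𝓝 (0 : ℝ), x + ε ∈ I ∧ x - ε ∈ I := by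
    have hx' := mem_interior_iff_mem_nhds.mp hx
    exact (((continuous_const_add x).tendsto' 0 x (add_zero x)).eventually hx').and
      (((continuous_sub_left x).tendsto' 0 x (sub_zero x)).eventually hx')
  filter_upwards [hI.filter_mono nhdsWithin_le_nhds,
    eventually_sigmaCoeff_half_two_mul (K := K) (show 0 < N - 1 by linarith),
    self_mem_nhdsWithin] with ε ⟨hplus, hminus⟩ ⟨hc, hσ⟩ (hε : 0 < ε)
  have hcd := hCD.2 (x - ε) hminus (x + ε) hplus (1 / 2) ⟨by norm_num, by norm_num⟩
  rw [show (1 : ℝ) - 1 / 2 = 1 / 2 by norm_num,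
    show 1 / 2 * (x + ε) + 1 / 2 * (x - ε) = x by ring,
    show |x + ε - (x - ε)| = 2 * ε by rw [abs_of_pos (by linarith)]; ring, hσ] at hcd
  have := le_of_ofReal_mul_add_ofReal_mul_le (by positivity) (by positivity)
    (rpow_nonneg (hCD.1 _ hplus) _) (rpow_nonneg (hCD.1 _ hminus) _)
    (rpow_nonneg (hCD.1 x (interior_subset hx)) _) hcd
  rw [← mul_add, one_div_mul_eq_div, div_le_iff₀ (by positivity)] at this
  linarith

theorem secondPeanoDeriv_le (hN : 1 < N) (hCD : IsCDDensity K N h I) (hx : x ∈ interior I)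
    {q : ℝ} (hq : HasSecondPeanoDerivAt (fun y => h y ^ (1 / (N - 1))) q x) :
    q ≤ -(K / (N - 1)) * h x ^ (1 / (N - 1)) := by
  refine le_of_tendsto_of_tendsto hq.tendsto_symmetricSecondDifference
    ((tendsto_two_mul_generalizedCos_sub_two_div_sq _).mul_const _) ?_
  filter_upwards [hCD.eventually_midpoint_le hN hx] with ε hε
  rw [div_mul_eq_mul_div]
  gcongr
  linarith

theorem le_of_hasDerivAt_deriv (hN : 1 < N) (hI : Convex ℝ I) (hCD : IsCDDensity K N h I)
    (hx : x ∈ interior I) {q : ℝ} (hg : DifferentiableAt ℝ (fun y => h y ^ (1 / (N - 1))) x)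
    (hq : HasDerivAt (deriv fun y => h y ^ (1 / (N - 1))) q x) :
    q ≤ -(K / (N - 1)) * h x ^ (1 / (N - 1)) := by
  by_cases hev : ∀ᶠ y in 𝓝[≠] x, DifferentiableAt ℝ (fun y => h y ^ (1 / (N - 1))) y
  · refine hCD.secondPeanoDeriv_le hN hx (hasSecondPeanoDerivAt_of_hasDerivAt ?_ hq)
    have hnhds : ∀ᶠ y in 𝓝 x, DifferentiableAt ℝ (fun y => h y ^ (1 / (N - 1))) y := by
      rw [← nhdsNE_sup_pure x, eventually_sup]
      exact ⟨hev, hg⟩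
    exact hnhds.mono fun y hy => hy.hasDerivAt
  -- otherwise `q` is the junk value `0` and `g` is flat at `x`
  obtain ⟨hg0, rfl⟩ :=
    deriv_eq_zero_and_eq_zero_of_frequently_not_differentiableAt hq (not_eventually.mp hev)
  rcases le_or_gt K 0 with hK | hK
  · have : 0 ≤ h x ^ (1 / (N - 1)) := rpow_nonneg (hCD.1 x (interior_subset hx)) _
    have : 0 ≤ -(K / (N - 1)) := neg_nonneg.mpr (div_nonpos_of_nonpos_of_nonneg hK (by linarith))
    positivity
  · have hconc := (hCD.concaveOn hN hK.le hI).subset interior_subset hI.interior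
    exact hCD.secondPeanoDeriv_le hN hx
      (hconc.hasSecondPeanoDerivAt_zero isOpen_interior hx (hg0 ▸ hg.hasDerivAt) hq)

end IsCDDensity

/-- Pointwise differential inequality for `CD(K,N)` densities: if `h` is a `CD(K,N)`
density on an interval `I`, not identically zero, and `g := h^{1/(N-1)}` has a second
Peano derivative `q` at an interior point `x`, then `q ≤ -(K/(N-1))·g(x)`; equivalently,
at any interior point where `h` is twice differentiable,
`(log h)''(x) + ((log h)'(x))²/(N-1) ≤ -K`. -/
theorem statement15 (K N : ℝ) (hN : 1 < N) (I : Set ℝ) (hI : Convex ℝ I)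
    (h : ℝ → ℝ) (hCD : IsCDDensity K N h I) (hne : ∃ x ∈ I, h x ≠ 0) :
    (∀ x ∈ interior I, ∀ q : ℝ,
        HasSecondPeanoDerivAt (fun y => h y ^ (1 / (N - 1))) q x →
        q ≤ -(K / (N - 1)) * h x ^ (1 / (N - 1))) ∧
      (∀ x ∈ interior I, ∀ h'' : ℝ,
        DifferentiableAt ℝ h x → HasDerivAt (deriv h) h'' x →
        h'' / h x - (deriv h x / h x) ^ 2 + (deriv h x / h x) ^ 2 / (N - 1) ≤ -K) := by
  refine ⟨fun x hx q hq => hCD.secondPeanoDeriv_le hN hx hq, fun x hx h'' hd hh'' => ?_⟩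
  have hx0 : 0 < h x := hCD.pos_of_mem_interior hN hne hx
  have hN1 : 0 < N - 1 := by linarith
  have key := hCD.le_of_hasDerivAt_deriv hN hI hx
    (hd.rpow_const (Or.inl hx0.ne')) (hasDerivAt_deriv_rpow_const (by positivity) hx0 hd hh'')
  have hgx : 0 < 1 / (N - 1) * h x ^ (1 / (N - 1)) := by positivity
  have hscaled : 1 / (N - 1) * h x ^ (1 / (N - 1)) *
      (h'' / h x - (deriv h x / h x) ^ 2 + (deriv h x / h x) ^ 2 / (N - 1)) ≤
      1 / (N - 1) * h x ^ (1 / (N - 1)) * -K := by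
    convert key using 1 <;> ring
  exact le_of_mul_le_mul_left hscaled hgx
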